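/- Let C be an abelian category and 𝒲 a class of objects of C closed under isomorphisms, finite direct sums, and cokernels of monomorphisms (i.e., for every short exact sequence 0→A→B→C→0 with A, B ∈ 𝒲 one has C ∈ 𝒲). Let 0→Y₁→Y₀→Y→0 be a short exact sequence in C, let (W₀ⁱ)_{i≥0} be the terms of a coproper 𝒲-coresolution of Y₀ and (W₁ⁱ)_{i≥0} the terms of a coproper 𝒲-coresolution of Y₁. Then there exists an object W ∈ 𝒲 such that: (1) Y admits a coproper 𝒲-coresolution whose 0-th term is W and whose i-th term is W₀ⁱ ⊕ W₁^{i+1} for all i ≥ 1, and there is a short exact sequence 0→W₁⁰→W₀⁰⊕W₁¹→W→0; (2) if the two given coproper 𝒲-coresolutions are Hom(𝒲,−)-exact and the short exact sequence 0→Y₁→Y₀→Y→0 is Hom(𝒲,−)-exact, then the coproper 𝒲-coresolution of Y in (1) can be chosen Hom(𝒲,−)-exact. -/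

import Mathlib

open CategoryTheory Category Limits

universe v u

variable {C : Type u} [Category.{v} C] [Abelian C]

def SES {A B X : C} (f : A ⟶ B) (g : B ⟶ X) : Prop :=
  ∃ w : f ≫ g = 0, (CategoryTheory.ShortComplex.mk f g w).ShortExact

def CovExact (𝒲 : Set C) {A B X : C} (f : A ⟶ B) (g : B ⟶ X) : Prop :=
  ∀ W ∈ 𝒲,
    (Function.Injective fun u : W ⟶ A => u ≫ f) ∧
    (∀ v : W ⟶ B, v ≫ g = 0 → ∃ u : W ⟶ A, u ≫ f = v) ∧
    (Function.Surjective fun v : W ⟶ B => v ≫ g)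

def ContraExact (𝒲 : Set C) {A B X : C} (f : A ⟶ B) (g : B ⟶ X) : Prop :=
  ∀ W ∈ 𝒲,
    (Function.Injective fun u : X ⟶ W => g ≫ u) ∧
    (∀ v : B ⟶ W, f ≫ v = 0 → ∃ u : X ⟶ W, g ≫ u = v) ∧
    (Function.Surjective fun v : B ⟶ W => f ≫ v)

/-- A proper `𝒲`-resolution of `A` with terms `W i`: short exact sequences
`0 ⟶ K (i+1) ⟶ W i ⟶ K i ⟶ 0` with `K 0 = A`, each `W i ∈ 𝒲`, each `Hom(𝒲,-)`-exact. -/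
structure ProperResolution (𝒲 : Set C) (A : C) (W : ℕ → C) where
  K : ℕ → C
  hK : K 0 = A
  g : ∀ i, K (i + 1) ⟶ W i
  f : ∀ i, W i ⟶ K i
  mem : ∀ i, W i ∈ 𝒲
  ses : ∀ i, SES (g i) (f i)
  proper : ∀ i, CovExact 𝒲 (g i) (f i)

/-- The proper resolution is in addition `Hom(-,𝒲)`-exact. -/
def ProperResolution.IsContraExact {𝒲 : Set C} {A : C} {W : ℕ → C}
    (R : ProperResolution 𝒲 A W) : Prop :=
  ∀ i, ContraExact 𝒲 (R.g i) (R.f i)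

/-- A coproper `𝒲`-coresolution of `A` with terms `W i`: short exact sequences
`0 ⟶ K i ⟶ W i ⟶ K (i+1) ⟶ 0` with `K 0 = A`, each `W i ∈ 𝒲`, each `Hom(-,𝒲)`-exact. -/
structure CoproperCoresolution (𝒲 : Set C) (A : C) (W : ℕ → C) where
  K : ℕ → C
  hK : K 0 = A
  g : ∀ i, K i ⟶ W i
  f : ∀ i, W i ⟶ K (i + 1)
  mem : ∀ i, W i ∈ 𝒲
  ses : ∀ i, SES (g i) (f i)
  coproper : ∀ i, ContraExact 𝒲 (g i) (f i)

/-- The coproper coresolution is in addition `Hom(𝒲,-)`-exact. -/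
def CoproperCoresolution.IsCovExact {𝒲 : Set C} {A : C} {W : ℕ → C}
    (R : CoproperCoresolution 𝒲 A W) : Prop :=
  ∀ i, CovExact 𝒲 (R.g i) (R.f i)

/-- Membership in the Gorenstein category `G(𝒲)`: `X` admits both a proper `𝒲`-resolution
which is `Hom(-,𝒲)`-exact and a coproper `𝒲`-coresolution which is `Hom(𝒲,-)`-exact
(i.e. a complete `𝒲`-resolution). -/
def MemGW (𝒲 : Set C) (X : C) : Prop :=
  (∃ (W : ℕ → C) (R : ProperResolution 𝒲 X W), R.IsContraExact) ∧
  (∃ (W : ℕ → C) (R : CoproperCoresolution 𝒲 X W), R.IsCovExact)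

/-!
Push `0 → Y₁ → Y₀ → Y → 0` out along `Y₁ → W₁⁰`. The pushout `P` sits in a `Hom(-,𝒲)`-exact
sequence `0 → Y₀ → P → K₁¹ → 0` and in `0 → W₁⁰ → P → Y → 0`. The horseshoe construction on the
first sequence, fed with the coresolutions of `Y₀` and of the cosyzygy `K₁¹`, gives a coproper
coresolution `0 → P → W₀⁰ ⊕ W₁¹ → W₀¹ ⊕ W₁² → ⋯` of `P`. Then `W := (W₀⁰ ⊕ W₁¹) / W₁⁰` lies in `𝒲`,
and the third isomorphism theorem gives `0 → Y → W → P¹ → 0` with `P¹` the first cosyzygy of `P`;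
splicing it onto the rest of the coresolution of `P` gives that of `Y`. Every step preserves
`Hom(𝒲,-)`-exactness.
-/

open ZeroObject

namespace SES

variable {A B X : C} {f : A ⟶ B} {g : B ⟶ X}

lemma comp_eq_zero (h : SES f g) : f ≫ g = 0 := h.1

lemma mono (h : SES f g) : Mono f := h.2.mono_f

lemma epi (h : SES f g) : Epi g := h.2.epi_g

lemma exists_desc (h : SES f g) {V : C} (k : B ⟶ V) (hk : f ≫ k = 0) :
    ∃ u : X ⟶ V, g ≫ u = k :=
  have := h.epi
  ⟨h.2.exact.desc k hk, h.2.exact.g_desc k hk⟩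

lemma exists_lift (h : SES f g) {V : C} (k : V ⟶ B) (hk : k ≫ g = 0) :
    ∃ u : V ⟶ A, u ≫ f = k :=
  have := h.mono
  ⟨h.2.exact.lift k hk, h.2.exact.lift_f k hk⟩

lemma neg_left (h : SES f g) : SES (-f) g := by
  obtain ⟨w, hw⟩ := h
  refine ⟨by simp [w], ShortComplex.shortExact_of_iso ?_ hw⟩
  exact ShortComplex.isoMk (Iso.mk (-𝟙 A) (-𝟙 A)) (Iso.refl B) (Iso.refl X)

lemma eqToHom_comp (h : SES f g) {A' : C} (e : A' = A) : SES (eqToHom e ≫ f) g := by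
  subst e
  simpa using h

lemma comp_eqToHom (h : SES f g) {X' : C} (e : X = X') : SES f (g ≫ eqToHom e) := by
  subst e
  simpa using h

end SES

lemma ses_cokernel_π {A B : C} (f : A ⟶ B) [Mono f] : SES f (cokernel.π f) :=
  ⟨cokernel.condition f, .mk' (ShortComplex.exact_of_g_is_cokernel _ (cokernelIsCokernel f))
    inferInstance inferInstance⟩

lemma ses_inl_snd (X Y : C) : SES (biprod.inl : X ⟶ X ⊞ Y) biprod.snd :=
  ⟨biprod.inl_snd, (ShortComplex.Splitting.ofHasBinaryBiproduct X Y).shortExact⟩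

lemma ses_inr_fst (X Y : C) : SES (biprod.inr : Y ⟶ X ⊞ Y) biprod.fst :=
  ⟨biprod.inr_fst, .mk' (ShortComplex.exact_of_f_is_kernel _ (biprod.isKernelFstKernelFork X Y))
    inferInstance inferInstance⟩

lemma ses_zero_id (A : C) : SES (0 : (0 : C) ⟶ A) (𝟙 A) :=
  ⟨zero_comp, (ShortComplex.Splitting.ofIsZeroOfIsIso _ (isZero_zero C) inferInstance).shortExact⟩

lemma ses_id_zero (A : C) : SES (𝟙 A) (0 : A ⟶ (0 : C)) :=
  ⟨comp_zero, (ShortComplex.Splitting.ofIsIsoOfIsZero _ inferInstance (isZero_zero C)).shortExact⟩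

namespace ContraExact

variable {𝒲 : Set C} {A B X : C} {f : A ⟶ B} {g : B ⟶ X}

lemma of_ses (h : SES f g) (hext : ∀ V ∈ 𝒲, ∀ u : A ⟶ V, ∃ w : B ⟶ V, f ≫ w = u) :
    ContraExact 𝒲 f g := fun V hV =>
  have := h.epi
  ⟨fun _ _ e => (cancel_epi g).1 e, fun v hv => h.exists_desc v hv, hext V hV⟩

lemma exists_ext (hc : ContraExact 𝒲 f g) {V : C} (hV : V ∈ 𝒲) (u : A ⟶ V) :
    ∃ w : B ⟶ V, f ≫ w = u :=
  (hc V hV).2.2 u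

lemma eqToHom_comp (hc : ContraExact 𝒲 f g) {A' : C} (e : A' = A) :
    ContraExact 𝒲 (eqToHom e ≫ f) g := by
  subst e
  simpa using hc

lemma comp_eqToHom (hc : ContraExact 𝒲 f g) {X' : C} (e : X = X') :
    ContraExact 𝒲 f (g ≫ eqToHom e) := by
  subst e
  simpa using hc

end ContraExact

namespace CovExact

variable {𝒲 : Set C} {A B X : C} {f : A ⟶ B} {g : B ⟶ X}

lemma of_ses (h : SES f g) (hlift : ∀ V ∈ 𝒲, ∀ u : V ⟶ X, ∃ w : V ⟶ B, w ≫ g = u) :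
    CovExact 𝒲 f g := fun V hV =>
  have := h.mono
  ⟨fun _ _ e => (cancel_mono f).1 e, fun v hv => h.exists_lift v hv, hlift V hV⟩

lemma exists_lift (hc : CovExact 𝒲 f g) {V : C} (hV : V ∈ 𝒲) (u : V ⟶ X) :
    ∃ w : V ⟶ B, w ≫ g = u :=
  (hc V hV).2.2 u

lemma eqToHom_comp (hc : CovExact 𝒲 f g) {A' : C} (e : A' = A) :
    CovExact 𝒲 (eqToHom e ≫ f) g := by
  subst e
  simpa using hc

end CovExact

section NineLemma

attribute [local instance] Abelian.Pseudoelement.objectToSort Abelian.Pseudoelement.homToFun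

open Abelian.Pseudoelement

lemma SES.of_rows_of_columns {X₁ X₂ X₃ Y₁ Y₂ Y₃ Z₁ Z₂ Z₃ : C}
    {f₁ : X₁ ⟶ X₂} {g₁ : X₂ ⟶ X₃} {f₂ : Y₁ ⟶ Y₂} {g₂ : Y₂ ⟶ Y₃} {f₃ : Z₁ ⟶ Z₂} {g₃ : Z₂ ⟶ Z₃}
    {m₁ : X₁ ⟶ Y₁} {m₂ : X₂ ⟶ Y₂} {m₃ : X₃ ⟶ Y₃} {p₁ : Y₁ ⟶ Z₁} {p₂ : Y₂ ⟶ Z₂} {p₃ : Y₃ ⟶ Z₃}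
    (hr₁ : SES f₁ g₁) (hr₂ : SES f₂ g₂) (hc₁ : SES m₁ p₁) (hc₂ : SES m₂ p₂) (hc₃ : SES m₃ p₃)
    (sq₁ : f₁ ≫ m₂ = m₁ ≫ f₂) (sq₂ : g₁ ≫ m₃ = m₂ ≫ g₂)
    (sq₃ : f₂ ≫ p₂ = p₁ ≫ f₃) (sq₄ : g₂ ≫ p₃ = p₂ ≫ g₃) : SES f₃ g₃ := by
  have := hc₁.epi; have := hc₂.epi; have := hc₃.epi; have := hc₃.mono
  have := hr₁.epi; have := hr₂.epi; have := hr₂.mono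
  have app : ∀ {P Q Q' R : C} {a : P ⟶ Q} {b : Q ⟶ R} {a' : P ⟶ Q'} {b' : Q' ⟶ R},
      a ≫ b = a' ≫ b' → ∀ z, b (a z) = b' (a' z) := fun h z => by
    rw [← Abelian.Pseudoelement.comp_apply, h, Abelian.Pseudoelement.comp_apply]
  have zero : ∀ {P Q R : C} {a : P ⟶ Q} {b : Q ⟶ R}, a ≫ b = 0 → ∀ z, b (a z) = 0 :=
    fun h z => by rw [← Abelian.Pseudoelement.comp_apply, h, Abelian.Pseudoelement.zero_apply]
  have w₃ : f₃ ≫ g₃ = 0 := by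
    rw [← cancel_epi p₁, ← reassoc_of% sq₃, ← sq₄, reassoc_of% hr₂.comp_eq_zero, zero_comp,
      comp_zero]
  have : Epi g₃ := by
    have : Epi (p₂ ≫ g₃) := sq₄ ▸ epi_comp g₂ p₃
    exact epi_of_epi p₂ g₃
  have : Mono f₃ := by
    refine mono_of_zero_of_map_zero _ fun z hz => ?_
    obtain ⟨y, rfl⟩ := pseudo_surjective_of_epi p₁ z
    obtain ⟨x, hx⟩ := pseudo_exact_of_exact hc₂.2.exact (f₂ y) (by rw [app sq₃, hz])
    have hgx : g₁ x = 0 := zero_of_map_zero _ (pseudo_injective_of_mono m₃) _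
      (by rw [app sq₂, hx, zero hr₂.comp_eq_zero])
    obtain ⟨x₁, rfl⟩ := pseudo_exact_of_exact hr₁.2.exact x hgx
    obtain rfl : m₁ x₁ = y := pseudo_injective_of_mono f₂ (by rw [← app sq₁, hx])
    exact zero hc₁.comp_eq_zero x₁
  refine ⟨w₃, .mk' (exact_of_pseudo_exact _ fun z hz => ?_) ‹_› ‹_›⟩
  obtain ⟨y, rfl⟩ := pseudo_surjective_of_epi p₂ z
  obtain ⟨x₃, hx₃⟩ := pseudo_exact_of_exact hc₃.2.exact (g₂ y) (by rw [app sq₄]; exact hz)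
  obtain ⟨x₂, rfl⟩ := pseudo_surjective_of_epi g₁ x₃
  obtain ⟨y', hy'₀, hy'⟩ := sub_of_eq_image g₂ y (m₂ x₂) (by rw [← app sq₂, hx₃])
  obtain ⟨y₁, rfl⟩ := pseudo_exact_of_exact hr₂.2.exact y' hy'₀
  exact ⟨p₁ y₁, by rw [← app sq₃, hy' _ p₂ (zero hc₂.comp_eq_zero x₂)]⟩

end NineLemma

theorem exists_ses_pushout {𝒲 : Set C} {Y₁ Y₀ Y V K : C} {x : Y₁ ⟶ Y₀} {y : Y₀ ⟶ Y}
    {g : Y₁ ⟶ V} {f : V ⟶ K} (hxy : SES x y) (hgf : SES g f) (hc : ContraExact 𝒲 g f) :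
    ∃ (P : C) (a : Y₀ ⟶ P) (b : P ⟶ K) (c : V ⟶ P) (d : P ⟶ Y),
      SES a b ∧ ContraExact 𝒲 a b ∧ SES c d := by
  -- `cokernel j` is the pushout of `x` and `g`
  let j : Y₁ ⟶ Y₀ ⊞ V := biprod.lift x (-g)
  have := hxy.mono
  have : Mono j := mono_of_mono_fac (biprod.lift_fst x (-g))
  have hb : j ≫ biprod.desc 0 f = 0 := by simp [j, hgf.comp_eq_zero]
  have hd : j ≫ biprod.desc y 0 = 0 := by simp [j, hxy.comp_eq_zero]
  have hab : SES (biprod.inl ≫ cokernel.π j) (cokernel.desc j _ hb) :=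
    .of_rows_of_columns (ses_zero_id Y₁) (ses_inl_snd Y₀ V) (ses_zero_id Y₀) (ses_cokernel_π j)
      hgf.neg_left (by simp) (by simp [j]) (by simp) (by ext <;> simp)
  have hcd : SES (biprod.inr ≫ cokernel.π j) (cokernel.desc j _ hd) :=
    .of_rows_of_columns (ses_zero_id Y₁) (ses_inr_fst Y₀ V) (ses_zero_id V) (ses_cokernel_π j)
      hxy (by simp) (by simp [j]) (by simp) (by ext <;> simp)
  refine ⟨_, _, _, _, _, hab, .of_ses hab fun U hU u => ?_, hcd⟩
  -- `u` and an extension of `x ≫ u` along `g` glue to a map out of the pushout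
  obtain ⟨w, hw⟩ := hc.exists_ext hU (x ≫ u)
  exact ⟨cokernel.desc j (biprod.desc u w) (by simp [j, hw]), by simp⟩

theorem exists_ses_cokernel_comp {𝒲 : Set C} {V P Y B K : C} {c : V ⟶ P} {d : P ⟶ Y}
    {G : P ⟶ B} {F : B ⟶ K} (hcd : SES c d) (hGF : SES G F) :
    ∃ (W : C) (π : B ⟶ W) (ι : Y ⟶ W) (τ : W ⟶ K), SES (c ≫ G) π ∧ SES ι τ ∧
      (ContraExact 𝒲 G F → ContraExact 𝒲 ι τ) ∧ (CovExact 𝒲 G F → CovExact 𝒲 ι τ) := by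
  have := hcd.mono
  have := hGF.mono
  have := hcd.epi
  obtain ⟨ι, hι⟩ := hcd.exists_desc (G ≫ cokernel.π (c ≫ G))
    (by rw [← Category.assoc, cokernel.condition])
  have hF : (c ≫ G) ≫ F = 0 := by simp [hGF.comp_eq_zero]
  have hιτ : SES ι (cokernel.desc _ F hF) :=
    .of_rows_of_columns (ses_id_zero V) hGF hcd (ses_cokernel_π (c ≫ G)) (ses_zero_id K)
      (by simp) (by simp [hGF.comp_eq_zero]) hι.symm (by simp)
  refine ⟨_, _, ι, _, ses_cokernel_π (c ≫ G), hιτ, fun hc => .of_ses hιτ fun U hU u => ?_,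
    fun hc => .of_ses hιτ fun U hU u => ?_⟩
  · obtain ⟨w, hw⟩ := hc.exists_ext hU (d ≫ u)
    refine ⟨cokernel.desc _ w (by simp [hw, reassoc_of% hcd.comp_eq_zero]), ?_⟩
    rw [← cancel_epi d, reassoc_of% hι, cokernel.π_desc, hw]
  · obtain ⟨w, hw⟩ := hc.exists_lift hU u
    exact ⟨w ≫ cokernel.π _, by simp [hw]⟩

structure CoproperExtension (𝒲 : Set C) (S Q : C) where
  mid : C
  ι : S ⟶ mid
  π : mid ⟶ Q
  ses : SES ι π
  contra : ContraExact 𝒲 ι π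

section HorseshoeStep

variable {𝒲 : Set C} {S T Q VS VQ BS BQ : C} {m : S ⟶ T} {p : T ⟶ Q}
  {gS : S ⟶ VS} {fS : VS ⟶ BS} {gQ : Q ⟶ VQ} {fQ : VQ ⟶ BQ} {e : T ⟶ VS}

lemma mono_biprod_lift_of_ses (hmp : SES m p) [Mono gS] [Mono gQ] (he : m ≫ e = gS) :
    Mono (biprod.lift e (p ≫ gQ)) := by
  refine Preadditive.mono_of_cancel_zero _ fun u hu => ?_
  have hup : u ≫ p = 0 := zero_of_comp_mono gQ (by simpa using hu =≫ biprod.snd)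
  obtain ⟨v, rfl⟩ := hmp.exists_lift u hup
  have : v ≫ gS = 0 := by simpa [← he] using hu =≫ biprod.fst
  rw [zero_of_comp_mono gS this, zero_comp]

lemma exists_biprod_lift_comp_eq (hmp : SES m p) (hcS : ContraExact 𝒲 gS fS)
    (hcQ : ContraExact 𝒲 gQ fQ) (he : m ≫ e = gS) {V : C} (hV : V ∈ 𝒲) (u : T ⟶ V) :
    ∃ w : VS ⊞ VQ ⟶ V, biprod.lift e (p ≫ gQ) ≫ w = u := by
  obtain ⟨w₁, hw₁⟩ := hcS.exists_ext hV (m ≫ u)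
  obtain ⟨q, hq⟩ := hmp.exists_desc (u - e ≫ w₁) (by simp [reassoc_of% he, hw₁])
  obtain ⟨w₂, hw₂⟩ := hcQ.exists_ext hV q
  exact ⟨biprod.desc w₁ w₂, by simp [hw₂, hq]⟩

theorem CoproperExtension.exists_next (E : CoproperExtension 𝒲 S Q) (hS : SES gS fS)
    (hcS : ContraExact 𝒲 gS fS) (hVS : VS ∈ 𝒲) (hQ : SES gQ fQ) (hcQ : ContraExact 𝒲 gQ fQ) :
    ∃ (E' : CoproperExtension 𝒲 BS BQ) (G : E.mid ⟶ VS ⊞ VQ) (F : VS ⊞ VQ ⟶ E'.mid),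
      SES G F ∧ ContraExact 𝒲 G F ∧
      (CovExact 𝒲 gS fS → CovExact 𝒲 gQ fQ → CovExact 𝒲 G F) := by
  have := hS.mono; have := hS.epi; have := hQ.mono
  obtain ⟨e, he⟩ := E.contra.exists_ext hVS gS
  set G := biprod.lift e (E.π ≫ gQ)
  have : Mono G := mono_biprod_lift_of_ses E.ses he
  have hGF := ses_cokernel_π G
  have hιG : E.ι ≫ G = gS ≫ biprod.inl := by ext <;> simp [G, he, reassoc_of% E.ses.comp_eq_zero]
  obtain ⟨β, hβ⟩ := hS.exists_desc (biprod.inl ≫ cokernel.π G) (by simp [← reassoc_of% hιG])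
  have hγ : G ≫ biprod.desc 0 fQ = 0 := by simp [G, hQ.comp_eq_zero]
  set γ := cokernel.desc G _ hγ
  have hβγ : SES β γ := .of_rows_of_columns E.ses (ses_inl_snd VS VQ) hS hGF hQ hιG
    (by simp [G]) hβ.symm (by ext <;> simp [γ])
  have hcβγ : ContraExact 𝒲 β γ := .of_ses hβγ fun V hV u => by
    obtain ⟨q, hq⟩ := E.ses.exists_desc (e ≫ fS ≫ u)
      (by simp [reassoc_of% he, reassoc_of% hS.comp_eq_zero])
    obtain ⟨t, ht⟩ := hcQ.exists_ext hV q
    refine ⟨cokernel.desc G (biprod.desc (fS ≫ u) (-t)) (by simp [G, ht, hq]), ?_⟩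
    rw [← cancel_epi fS, reassoc_of% hβ]
    simp
  refine ⟨⟨_, β, γ, hβγ, hcβγ⟩, G, cokernel.π G, hGF, .of_ses hGF fun V hV u =>
    exists_biprod_lift_comp_eq E.ses hcS hcQ he hV u, fun hvS hvQ => .of_ses hGF fun V hV v => ?_⟩
  obtain ⟨r, hr⟩ := hvQ.exists_lift hV (v ≫ γ)
  obtain ⟨s, hs⟩ := hβγ.exists_lift (v - r ≫ biprod.inr ≫ cokernel.π G) (by simp [γ, hr])
  obtain ⟨t, ht⟩ := hvS.exists_lift hV s
  refine ⟨biprod.lift t r, ?_⟩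
  rw [biprod.lift_eq, Preadditive.add_comp, Category.assoc, Category.assoc, ← hβ,
    reassoc_of% ht, hs, sub_add_cancel]

end HorseshoeStep

namespace CoproperCoresolution

variable {𝒲 : Set C} {S Q : C} {WS WQ : ℕ → C}

noncomputable def horseshoeExtension (RS : CoproperCoresolution 𝒲 S WS)
    (RQ : CoproperCoresolution 𝒲 Q WQ) (E : CoproperExtension 𝒲 (RS.K 0) (RQ.K 0)) (i : ℕ) :
    CoproperExtension 𝒲 (RS.K i) (RQ.K i) :=
  Nat.rec E (fun i Eᵢ => (Eᵢ.exists_next (RS.ses i) (RS.coproper i) (RS.mem i) (RQ.ses i)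
    (RQ.coproper i)).choose) i

lemma exists_horseshoeExtension_succ (RS : CoproperCoresolution 𝒲 S WS)
    (RQ : CoproperCoresolution 𝒲 Q WQ) (E : CoproperExtension 𝒲 (RS.K 0) (RQ.K 0)) (i : ℕ) :
    ∃ (G : (horseshoeExtension RS RQ E i).mid ⟶ WS i ⊞ WQ i)
      (F : WS i ⊞ WQ i ⟶ (horseshoeExtension RS RQ E (i + 1)).mid),
      SES G F ∧ ContraExact 𝒲 G F ∧
      (CovExact 𝒲 (RS.g i) (RS.f i) → CovExact 𝒲 (RQ.g i) (RQ.f i) → CovExact 𝒲 G F) :=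
  (horseshoeExtension RS RQ E i |>.exists_next (RS.ses i) (RS.coproper i) (RS.mem i)
      (RQ.ses i) (RQ.coproper i)).choose_spec

theorem exists_horseshoe (RS : CoproperCoresolution 𝒲 S WS) (RQ : CoproperCoresolution 𝒲 Q WQ)
    (hsum : ∀ {U V : C}, U ∈ 𝒲 → V ∈ 𝒲 → (U ⊞ V) ∈ 𝒲) {T : C} {m : S ⟶ T} {p : T ⟶ Q}
    (hmp : SES m p) (hc : ContraExact 𝒲 m p) :
    ∃ R : CoproperCoresolution 𝒲 T (fun i => WS i ⊞ WQ i),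
      RS.IsCovExact → RQ.IsCovExact → R.IsCovExact := by
  let E : CoproperExtension 𝒲 (RS.K 0) (RQ.K 0) :=
    ⟨T, eqToHom RS.hK ≫ m, p ≫ eqToHom RQ.hK.symm, (hmp.eqToHom_comp _).comp_eqToHom _,
      (hc.eqToHom_comp _).comp_eqToHom _⟩
  choose G F hGF hcGF hvGF using exists_horseshoeExtension_succ RS RQ E
  exact ⟨⟨fun i => (horseshoeExtension RS RQ E i).mid, rfl, G, F,
    fun i => hsum (RS.mem i) (RQ.mem i), hGF, hcGF⟩, fun hS hQ i => hvGF i (hS i) (hQ i)⟩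

variable {A : C} {W : ℕ → C}

def shift (R : CoproperCoresolution 𝒲 A W) :
    CoproperCoresolution 𝒲 (R.K 1) (fun i => W (i + 1)) where
  K i := R.K (i + 1)
  hK := rfl
  g i := R.g (i + 1)
  f i := R.f (i + 1)
  mem i := R.mem (i + 1)
  ses i := R.ses (i + 1)
  coproper i := R.coproper (i + 1)

lemma IsCovExact.shift {R : CoproperCoresolution 𝒲 A W} (h : R.IsCovExact) :
    R.shift.IsCovExact :=
  fun i => h (i + 1)

def cons {W' : ℕ → C} (R : CoproperCoresolution 𝒲 A (fun i => W' (i + 1))) {Y : C}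
    (ι : Y ⟶ W' 0) (τ : W' 0 ⟶ R.K 0) (hW : W' 0 ∈ 𝒲) (h : SES ι τ) (hc : ContraExact 𝒲 ι τ) :
    CoproperCoresolution 𝒲 Y W' where
  K i := Nat.casesOn i Y R.K
  hK := rfl
  g i := Nat.casesOn i ι R.g
  f i := Nat.casesOn i τ R.f
  mem i := Nat.casesOn i hW R.mem
  ses i := Nat.casesOn i h R.ses
  coproper i := Nat.casesOn i hc R.coproper

lemma IsCovExact.cons {W' : ℕ → C} {R : CoproperCoresolution 𝒲 A (fun i => W' (i + 1))}
    {Y : C} {ι : Y ⟶ W' 0} {τ : W' 0 ⟶ R.K 0} {hW : W' 0 ∈ 𝒲} {h : SES ι τ}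
    {hc : ContraExact 𝒲 ι τ} (hR : R.IsCovExact) (hv : CovExact 𝒲 ι τ) :
    (R.cons ι τ hW h hc).IsCovExact :=
  fun i => Nat.casesOn i hv hR

end CoproperCoresolution

theorem stmt_9 (𝒲 : Set C)
    (hsum : ∀ {U V : C}, U ∈ 𝒲 → V ∈ 𝒲 → (U ⊞ V) ∈ 𝒲)
    (hcoker : ∀ {A B Z : C} (f : A ⟶ B) (g : B ⟶ Z), SES f g → A ∈ 𝒲 → B ∈ 𝒲 → Z ∈ 𝒲)
    {Y1 Y0 Y : C} (x : Y1 ⟶ Y0) (y : Y0 ⟶ Y) (hses : SES x y)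
    (W0 W1 : ℕ → C)
    (R0 : CoproperCoresolution 𝒲 Y0 W0) (R1 : CoproperCoresolution 𝒲 Y1 W1) :
    ∃ W : C, W ∈ 𝒲 ∧
      -- the short exact sequence 0 → W₁⁰ → W₀⁰ ⊕ W₁¹ → W → 0
      (∃ (u : W1 0 ⟶ W0 0 ⊞ W1 1) (v : W0 0 ⊞ W1 1 ⟶ W), SES u v) ∧
      -- (1) a coproper 𝒲-coresolution of Y with 0-th term W and i-th term W₀ⁱ ⊕ W₁^{i+1} (i ≥ 1)
      Nonempty (CoproperCoresolution 𝒲 Y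
        (fun i => match i with | 0 => W | n + 1 => W0 (n + 1) ⊞ W1 (n + 2))) ∧
      -- (2) if everything in sight is Hom(𝒲,-)-exact, the coresolution can be chosen
      -- Hom(𝒲,-)-exact as well
      (R0.IsCovExact → R1.IsCovExact → CovExact 𝒲 x y →
        ∃ R : CoproperCoresolution 𝒲 Y
            (fun i => match i with | 0 => W | n + 1 => W0 (n + 1) ⊞ W1 (n + 2)),
          R.IsCovExact) := by
  obtain ⟨P, a, b, c, d, hab, hcab, hcd⟩ :=
    exists_ses_pushout (hses.eqToHom_comp R1.hK) (R1.ses 0) (R1.coproper 0)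
  obtain ⟨R, hR⟩ := R0.exists_horseshoe R1.shift hsum hab hcab
  obtain ⟨W, π, ι, τ, hπ, hιτ, hcιτ, hvιτ⟩ :=
    exists_ses_cokernel_comp (𝒲 := 𝒲) hcd ((R.ses 0).eqToHom_comp R.hK.symm)
  have hW : W ∈ 𝒲 := hcoker _ _ hπ (R1.mem 0) (R.mem 0)
  have hcW := hcιτ ((R.coproper 0).eqToHom_comp R.hK.symm)
  refine ⟨W, hW, ⟨_, π, hπ⟩, ⟨R.shift.cons ι τ hW hιτ hcW⟩, fun h0 h1 _ => ?_⟩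
  have hvR := hR h0 h1.shift
  exact ⟨R.shift.cons ι τ hW hιτ hcW, hvR.shift.cons (hvιτ ((hvR 0).eqToHom_comp R.hK.symm))⟩
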